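/- arXiv:2004.12951 — 6 statements merged into one kernel-verified Lean document; each statement's English description precedes it below -/
import Mathlib

section
/- Let f : ℝ^n → ℝ^n be a continuously differentiable bijection such that at every point x the derivative Df(x) is symmetric and positive definite with respect to the Euclidean inner product. Then there exists a twice continuously differentiable function V : ℝ^n → ℝ such that: (a) V is strictly convex, i.e. V(λx₁ + (1−λ)x₂) < λV(x₁) + (1−λ)V(x₂) for all λ ∈ (0,1) and all x₁ ≠ x₂; (b) the gradient of V is the inverse function of f, i.e. ∇V(y) = f⁻¹(y) for all y ∈ ℝ^n; (c) there exists a point y* ∈ ℝ^n with V(y*) = 0 and V(y) > 0 for all y ≠ y*. -/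
open scoped RealInnerProductSpace
open Function Set

/-!
Positive definiteness of `Df` makes `f` a strictly monotone operator, and symmetry makes the
1-form `x ↦ ⟪f x, ·⟫` closed, so by the Poincaré lemma `f = ∇W` for some `W`. The Legendre
transform `V y = ⟪y, g y⟫ - W (g y)` of `W`, where `g = f⁻¹`, then has gradient `g`, which is
`C¹` by the inverse function theorem and strictly monotone because `f` is. A function with
strictly monotone gradient is strictly convex, and it attains a strict minimum where its
gradient vanishes, here at `f 0`; normalizing `W 0 = 0` makes that minimum `0`.
-/

section InverseFunction

variable {𝕜 : Type*} [RCLike 𝕜] {E F : Type*} [NormedAddCommGroup E] [NormedSpace 𝕜 E]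
  [CompleteSpace E] [NormedAddCommGroup F] [NormedSpace 𝕜 F] {n : WithTop ℕ∞}

theorem contDiff_invFun_of_bijective {f : E → F} (hf : ContDiff 𝕜 n f) (hn : n ≠ 0)
    (hbij : Bijective f) (hf' : ∀ x, ∃ e : E ≃L[𝕜] F, HasFDerivAt f (e : E →L[𝕜] F) x) :
    ContDiff 𝕜 n (invFun f) := by
  choose e he using hf'
  have hopen : IsOpenMap f :=
    isOpenMap_of_hasStrictFDerivAt_equiv fun x => hf.contDiffAt.hasStrictFDerivAt' (he x) hn
  let φ : E ≃ₜ F := (Equiv.ofBijective f hbij).toHomeomorphOfContinuousOpen hf.continuous hopen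
  have hsymm : invFun f = φ.symm :=
    funext fun y => hbij.1 <| (rightInverse_invFun hbij.2 y).trans (φ.apply_symm_apply y).symm
  exact hsymm ▸ φ.contDiff_symm he hf

end InverseFunction

section InnerProductSpace

variable {E : Type*} [NormedAddCommGroup E] [InnerProductSpace ℝ E]

theorem ContinuousLinearMap.exists_equiv_of_inner_pos [FiniteDimensional ℝ E] (A : E →L[ℝ] E)
    (hA : ∀ u, u ≠ 0 → 0 < ⟪A u, u⟫) : ∃ e : E ≃L[ℝ] E, (e : E →L[ℝ] E) = A := by
  have hinj : Injective A := by
    refine (injective_iff_map_eq_zero A).2 fun u hu => ?_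
    by_contra hu0
    simpa [hu] using hA u hu0
  exact ⟨(LinearEquiv.ofInjectiveEndo (A : E →ₗ[ℝ] E) hinj).toContinuousLinearEquiv, rfl⟩

def StrictMonotoneOperator (G : E → E) : Prop :=
  ∀ a b, a ≠ b → 0 < ⟪G a - G b, a - b⟫

theorem StrictMonotoneOperator.of_hasFDerivAt {f : E → E} {f' : E → E →L[ℝ] E}
    (hderiv : ∀ x, HasFDerivAt f (f' x) x) (hpos : ∀ x u, u ≠ 0 → 0 < ⟪f' x u, u⟫) :
    StrictMonotoneOperator f := by
  intro a b hab
  have hd : a - b ≠ 0 := sub_ne_zero.2 hab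
  have hline : ∀ t : ℝ, HasDerivAt (fun t : ℝ => ⟪f (b + t • (a - b)), a - b⟫)
      ⟪f' (b + t • (a - b)) (a - b), a - b⟫ t := fun t => by
    have hl : HasDerivAt (fun t : ℝ => b + t • (a - b)) (a - b) t := by
      simpa using ((hasDerivAt_id t).smul_const (a - b)).const_add b
    simpa using ((hderiv _).comp_hasDerivAt t hl).inner ℝ (hasDerivAt_const t (a - b))
  have hmono := strictMono_of_hasDerivAt_pos hline fun t => hpos _ _ hd
  simpa [inner_sub_left] using hmono zero_lt_one

theorem StrictMonotoneOperator.of_rightInverse {f g : E → E} (hf : StrictMonotoneOperator f)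
    (hfg : RightInverse g f) : StrictMonotoneOperator g := by
  intro u v huv
  have hne : g u ≠ g v := fun h => huv (by rw [← hfg u, h, hfg v])
  simpa [hfg u, hfg v, real_inner_comm] using hf (g u) (g v) hne

variable [CompleteSpace E]

theorem hasGradientAt_iff_hasFDerivAt_innerSL {V : E → ℝ} {g x : E} :
    HasGradientAt V g x ↔ HasFDerivAt V (innerSL ℝ g) x :=
  Iff.rfl

theorem HasGradientAt.hasDerivAt_comp_line {V : E → ℝ} {g p d : E} {t : ℝ}
    (hV : HasGradientAt V g (p + t • d)) :
    HasDerivAt (fun t : ℝ => V (p + t • d)) ⟪g, d⟫ t := by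
  have hl : HasDerivAt (fun t : ℝ => p + t • d) d t := by
    simpa using ((hasDerivAt_id t).smul_const d).const_add p
  exact (hasGradientAt_iff_hasFDerivAt_innerSL.1 hV).comp_hasDerivAt t hl

namespace StrictMonotoneOperator

variable {V : E → ℝ} {G : E → E}

theorem strictConvexOn_comp_line (hG : StrictMonotoneOperator G)
    (hV : ∀ x, HasGradientAt V (G x) x) (p : E) {d : E} (hd : d ≠ 0) :
    StrictConvexOn ℝ univ (fun t : ℝ => V (p + t • d)) := by
  have hderiv : deriv (fun t : ℝ => V (p + t • d)) = fun t => ⟪G (p + t • d), d⟫ :=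
    funext fun t => (hV _).hasDerivAt_comp_line.deriv
  refine StrictMono.strictConvexOn_univ_of_deriv ?_ (hderiv ▸ fun s t hst => ?_)
  · exact continuous_iff_continuousAt.2 fun t =>
      (hV _).hasDerivAt_comp_line.continuousAt
  · have hne : p + t • d ≠ p + s • d := fun h =>
      hst.ne' (smul_left_injective ℝ hd (add_left_cancel h))
    have hpos := hG _ _ hne
    rw [add_sub_add_left_eq_sub, ← sub_smul, real_inner_smul_right, inner_sub_left] at hpos
    nlinarith [sub_pos.2 hst]

theorem strictConvexOn_of_hasGradientAt (hG : StrictMonotoneOperator G)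
    (hV : ∀ x, HasGradientAt V (G x) x) : StrictConvexOn ℝ univ V := by
  refine ⟨convex_univ, fun x _ y _ hxy a b ha hb hab => ?_⟩
  have hline := (hG.strictConvexOn_comp_line hV y (sub_ne_zero.2 hxy)).2 (mem_univ 1)
    (mem_univ 0) one_ne_zero ha hb hab
  have hpoint : y + a • (x - y) = a • x + b • y := by
    rw [eq_sub_of_add_eq' hab]; module
  rw [← hpoint]
  simpa using hline

theorem lt_of_hasGradientAt_eq_zero (hG : StrictMonotoneOperator G)
    (hV : ∀ x, HasGradientAt V (G x) x) {x y : E} (hx : G x = 0) (hy : y ≠ x) : V x < V y := by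
  have hslope := (hG.strictConvexOn_comp_line hV x (sub_ne_zero.2 hy)).lt_slope_of_hasDerivAt
    (mem_univ 0) (mem_univ 1) zero_lt_one (hV _).hasDerivAt_comp_line
  simpa [hx, slope_def_field] using hslope

end StrictMonotoneOperator

theorem exists_hasGradientAt_of_symmetric {f : E → E} {f' : E → E →L[ℝ] E}
    (hderiv : ∀ x, HasFDerivAt f (f' x) x) (hsymm : ∀ x u v, ⟪f' x u, v⟫ = ⟪u, f' x v⟫) :
    ∃ W : E → ℝ, W 0 = 0 ∧ ∀ x, HasGradientAt W (f x) x := by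
  have hω : ∀ x, HasFDerivAt (fun x => innerSL ℝ (f x))
      ((innerSL ℝ : E →L[ℝ] E →L[ℝ] ℝ).comp (f' x)) x := fun x =>
    (innerSL ℝ : E →L[ℝ] E →L[ℝ] ℝ).hasFDerivAt.comp x (hderiv x)
  obtain ⟨W, hW⟩ := convex_univ.exists_forall_hasFDerivAt_of_fderiv_symmetric isOpen_univ
    (fun x _ => (hω x).differentiableAt.differentiableWithinAt) fun x _ u v => by
      simp only [(hω x).fderiv, ContinuousLinearMap.comp_apply, innerSL_apply_apply]
      rw [hsymm, real_inner_comm]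
  exact ⟨fun x => W x - W 0, sub_self _, fun x =>
    hasGradientAt_iff_hasFDerivAt_innerSL.2 ((hW x (mem_univ x)).sub_const _)⟩

theorem hasGradientAt_inner_sub_comp {W : E → ℝ} {f g : E → E} {g' : E →L[ℝ] E} {y : E}
    (hW : ∀ x, HasGradientAt W (f x) x) (hg : HasFDerivAt g g' y) (hfg : f (g y) = y) :
    HasGradientAt (fun y => ⟪y, g y⟫ - W (g y)) (g y) y := by
  rw [hasGradientAt_iff_hasFDerivAt_innerSL]
  have hWg := (hasGradientAt_iff_hasFDerivAt_innerSL.1 (hW (g y))).comp y hg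
  refine (((hasFDerivAt_id y).inner ℝ hg).sub hWg).congr_fderiv ?_
  ext v
  simp [hfg, real_inner_comm]

theorem contDiff_succ_of_hasGradientAt {V : E → ℝ} {G : E → E} {n : ℕ}
    (hV : ∀ x, HasGradientAt V (G x) x) (hG : ContDiff ℝ n G) : ContDiff ℝ (n + 1) V :=
  contDiff_succ_iff_hasFDerivAt.2 ⟨fun x => innerSL ℝ (G x),
    (innerSL ℝ : E →L[ℝ] E →L[ℝ] ℝ).contDiff.comp hG, fun x =>
    hasGradientAt_iff_hasFDerivAt_innerSL.1 (hV x)⟩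

end InnerProductSpace

/-- For a continuously differentiable bijection `f` of ℝⁿ with everywhere
symmetric positive definite derivative there is a twice continuously differentiable,
strictly convex function `V` whose gradient is `f⁻¹` and which vanishes at exactly one
point and is positive elsewhere. -/
theorem exists_strictly_convex_potential_of_cd_bijection {n : ℕ}
    (f : EuclideanSpace ℝ (Fin n) → EuclideanSpace ℝ (Fin n))
    (hf : ContDiff ℝ 1 f) (hbij : Function.Bijective f)
    (f' : EuclideanSpace ℝ (Fin n) →
      EuclideanSpace ℝ (Fin n) →L[ℝ] EuclideanSpace ℝ (Fin n))
    (hderiv : ∀ x, HasFDerivAt f (f' x) x)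
    (hsymm : ∀ x u v, ⟪f' x u, v⟫ = ⟪u, f' x v⟫)
    (hpos : ∀ x u, u ≠ 0 → 0 < ⟪f' x u, u⟫) :
    ∃ V : EuclideanSpace ℝ (Fin n) → ℝ,
      ContDiff ℝ 2 V ∧
      (∀ lam : ℝ, lam ∈ Set.Ioo (0 : ℝ) 1 →
        ∀ x₁ x₂ : EuclideanSpace ℝ (Fin n), x₁ ≠ x₂ →
          V (lam • x₁ + (1 - lam) • x₂) < lam * V x₁ + (1 - lam) * V x₂) ∧
      (∀ y, gradient V y = Function.invFun f y) ∧
      (∃ ystar, V ystar = 0 ∧ ∀ y, y ≠ ystar → 0 < V y) := by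
  set g := invFun f
  have hfg : RightInverse g f := rightInverse_invFun hbij.2
  have hg : ContDiff ℝ 1 g := contDiff_invFun_of_bijective hf one_ne_zero hbij fun x => by
    obtain ⟨e, he⟩ := (f' x).exists_equiv_of_inner_pos (hpos x)
    exact ⟨e, he ▸ hderiv x⟩
  obtain ⟨W, hW0, hW⟩ := exists_hasGradientAt_of_symmetric hderiv hsymm
  have hgmono : StrictMonotoneOperator g :=
    (StrictMonotoneOperator.of_hasFDerivAt hderiv hpos).of_rightInverse hfg
  set V := fun y => ⟪y, g y⟫ - W (g y)
  have hV : ∀ y, HasGradientAt V (g y) y := fun y =>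
    hasGradientAt_inner_sub_comp hW ((hg.differentiable one_ne_zero y).hasFDerivAt) (hfg y)
  have hg0 : g (f 0) = 0 := leftInverse_invFun hbij.1 0
  have hV0 : V (f 0) = 0 := by simp [V, hg0, hW0]
  refine ⟨V, contDiff_succ_of_hasGradientAt hV hg, fun lam hlam x₁ x₂ hne => ?_,
    fun y => (hV y).gradient, f 0, hV0,
    fun y hy => hV0 ▸ hgmono.lt_of_hasGradientAt_eq_zero hV hg0 hy⟩
  simpa only [smul_eq_mul] using (hgmono.strictConvexOn_of_hasGradientAt hV).2 (mem_univ x₁)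
    (mem_univ x₂) hne hlam.1 (sub_pos.2 hlam.2) (add_sub_cancel lam 1)
end

section
/- Let f : ℝ^n → ℝ^n be a continuously differentiable map such that at every point x the derivative Df(x) is symmetric and positive definite with respect to the Euclidean inner product. For r ≥ 0 set m(r) := inf over x with ‖x‖ = r and unit vectors v of ⟪Df(x)v, v⟫ (the minimum over the sphere of radius r of the smallest eigenvalue of Df(x)). If ∫₀^∞ m(r) dr = ∞, then f is bijective. -/
open scoped RealInnerProductSpace
open MeasureTheory

/-!
Along the segment from `y` to `x`, the derivative of `s ↦ ⟪f (y + s • (x - y)), x - y⟫` is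
`⟪Df (x - y), x - y⟫ > 0`, so `⟪f x - f y, x - y⟫ > 0` and `f` is injective. Along the ray
through `x` the same computation, integrated, gives `∫₀^‖x‖ m ≤ ‖f x - f 0‖`; hence
`∫₀^∞ m = ∞` makes `f` proper, so its range is closed. By the inverse function theorem `f` is
open, so its range is also open, hence all of the connected space `ℝⁿ`.
-/

open Filter Set Topology Bornology

theorem IsOpenMap.surjective_of_isClosedMap {X Y : Type*} [TopologicalSpace X]
    [TopologicalSpace Y] [Nonempty X] [PreconnectedSpace Y] {f : X → Y}
    (ho : IsOpenMap f) (hc : IsClosedMap f) : Function.Surjective f :=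
  range_eq_univ.1 <| IsClopen.eq_univ ⟨hc.isClosed_range, ho.isOpen_range⟩ (range_nonempty f)

-- No measurability of `g` is assumed: `ofReal ∘ m` is not known to be measurable.
theorem tendsto_setLIntegral_Ioc_atTop {g : ℝ → ENNReal} {a : ℝ}
    (hg : ∫⁻ t in Ioi a, g t = ⊤) :
    Tendsto (fun R => ∫⁻ t in Ioc a R, g t) atTop (𝓝 ⊤) := by
  have hmono : Monotone fun R => ∫⁻ t in Ioc a R, g t := fun R R' h =>
    lintegral_mono_set (Ioc_subset_Ioc_right h)
  convert tendsto_atTop_iSup hmono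
  refine le_antisymm ?_ le_top
  calc ⊤ = ∫⁻ t in ⋃ k : ℕ, Ioc a (a + k), g t := by
        rw [iUnion_Ioc_eq_Ioi_self_iff.2 fun x _ =>
          ⟨⌈x - a⌉₊, by linarith [Nat.le_ceil (x - a)]⟩, hg]
    _ = ⨆ k : ℕ, ∫⁻ t in Ioc a (a + k), g t :=
        setLIntegral_iUnion_of_directed _ <| (Monotone.directed_le fun k l h =>
          Ioc_subset_Ioc_right (by gcongr))
    _ ≤ ⨆ R, ∫⁻ t in Ioc a R, g t := iSup_le fun k => le_iSup_of_le (a + k) le_rfl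

theorem tendsto_cobounded_of_setLIntegral_le {E F : Type*} [SeminormedAddCommGroup E]
    [SeminormedAddCommGroup F] {f : E → F} {g : ℝ → ENNReal}
    (hg : ∫⁻ t in Ioi 0, g t = ⊤)
    (hgrow : ∀ x, ∫⁻ t in Ioc 0 ‖x‖, g t ≤ ENNReal.ofReal ‖f x - f 0‖) :
    Tendsto f (cobounded E) (cobounded F) := by
  have hsub : Tendsto (fun x => ‖f x - f 0‖) (cobounded E) atTop :=
    ENNReal.tendsto_ofReal_nhds_top.1 <| tendsto_nhds_top_mono
      ((tendsto_setLIntegral_Ioc_atTop hg).comp tendsto_norm_cobounded_atTop) (.of_forall hgrow)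
  refine tendsto_norm_atTop_iff_cobounded.1 <|
    tendsto_atTop_mono (fun x => ?_) (tendsto_atTop_add_const_right _ (-‖f 0‖) hsub)
  linarith [norm_sub_le (f x) (f 0)]

section InnerProductSpace

variable {E : Type*} [NormedAddCommGroup E] [InnerProductSpace ℝ E]
  {f : E → E} {f' : E → E →L[ℝ] E}

theorem HasFDerivAt.hasDerivAt_inner_along_line {L : E →L[ℝ] E} {y d : E} {t : ℝ}
    (hf : HasFDerivAt f L (y + t • d)) :
    HasDerivAt (fun s : ℝ => ⟪f (y + s • d), d⟫) ⟪L d, d⟫ t := by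
  have hline : HasDerivAt (fun s : ℝ => y + s • d) d t := by
    simpa using ((hasDerivAt_id t).smul_const d).const_add y
  simpa [Function.comp_def] using (hf.comp_hasDerivAt t hline).inner ℝ (hasDerivAt_const t d)

theorem inner_sub_sub_pos_of_inner_fderiv_pos (hderiv : ∀ x, HasFDerivAt f (f' x) x)
    (hpos : ∀ x u, u ≠ 0 → 0 < ⟪f' x u, u⟫) {x y : E} (hxy : x ≠ y) :
    0 < ⟪f x - f y, x - y⟫ := by
  set φ : ℝ → ℝ := fun s => ⟪f (y + s • (x - y)), x - y⟫
  have hφ : ∀ t, HasDerivAt φ ⟪f' (y + t • (x - y)) (x - y), x - y⟫ t := fun t =>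
    (hderiv _).hasDerivAt_inner_along_line
  have hmono : StrictMono φ := strictMono_of_hasDerivAt_pos hφ fun t =>
    hpos _ _ (sub_ne_zero.2 hxy)
  have h01 : φ 0 < φ 1 := hmono zero_lt_one
  simp only [φ, zero_smul, add_zero, one_smul, add_sub_cancel] at h01
  rwa [inner_sub_left, sub_pos]

theorem injective_of_inner_fderiv_pos (hderiv : ∀ x, HasFDerivAt f (f' x) x)
    (hpos : ∀ x u, u ≠ 0 → 0 < ⟪f' x u, u⟫) : Function.Injective f := fun x y hfxy => by
  by_contra hxy
  simpa [hfxy] using inner_sub_sub_pos_of_inner_fderiv_pos hderiv hpos hxy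

theorem ContinuousLinearMap.injective_of_inner_pos {L : E →L[ℝ] E}
    (hL : ∀ u, u ≠ 0 → 0 < ⟪L u, u⟫) : Function.Injective L :=
  (injective_iff_map_eq_zero L).2 fun u hu => by
    by_contra hne
    simpa [hu] using hL u hne

theorem isOpenMap_of_inner_fderiv_pos [FiniteDimensional ℝ E]
    (hstrict : ∀ x, HasStrictFDerivAt f (f' x) x)
    (hpos : ∀ x u, u ≠ 0 → 0 < ⟪f' x u, u⟫) : IsOpenMap f :=
  isOpenMap_of_hasStrictFDerivAt_equiv (f' := fun x =>
      (LinearEquiv.ofInjectiveEndo (f' x : E →ₗ[ℝ] E)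
        ((f' x).injective_of_inner_pos (hpos x))).toContinuousLinearEquiv)
    hstrict

theorem setLIntegral_Ioc_norm_le_norm_sub (hderiv : ∀ x, HasFDerivAt f (f' x) x)
    (hf' : Continuous f') (hpos : ∀ x u, 0 ≤ ⟪f' x u, u⟫) {m : ℝ → ℝ}
    (hm : ∀ x v, ‖v‖ = 1 → m ‖x‖ ≤ ⟪f' x v, v⟫) (x : E) :
    ∫⁻ t in Ioc 0 ‖x‖, ENNReal.ofReal (m t) ≤ ENNReal.ofReal ‖f x - f 0‖ := by
  rcases eq_or_ne x 0 with rfl | hx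
  · simp
  set u := ‖x‖⁻¹ • x
  have hu : ‖u‖ = 1 := norm_smul_inv_norm hx
  have hxu : ‖x‖ • u = x := by simp [u, smul_smul, hx]
  set h : ℝ → ℝ := fun t => ⟪f' (t • u) u, u⟫
  have hh : Continuous h := by fun_prop
  have hftc : ∫ t in Ioc 0 ‖x‖, h t = ⟪f x - f 0, u⟫ := by
    rw [← intervalIntegral.integral_of_le (norm_nonneg x),
      intervalIntegral.integral_eq_sub_of_hasDerivAt
        (f := fun s : ℝ => ⟪f (s • u), u⟫)
        (fun t _ => by simpa using (hderiv (0 + t • u)).hasDerivAt_inner_along_line)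
        (hh.intervalIntegrable _ _), hxu, inner_sub_left]
    simp
  calc ∫⁻ t in Ioc 0 ‖x‖, ENNReal.ofReal (m t)
      ≤ ∫⁻ t in Ioc 0 ‖x‖, ENNReal.ofReal (h t) := by
        refine setLIntegral_mono (by fun_prop) fun t ht => ENNReal.ofReal_le_ofReal ?_
        simpa [norm_smul, hu, abs_of_pos ht.1] using hm (t • u) u hu
    _ = ENNReal.ofReal ⟪f x - f 0, u⟫ := by
        rw [← hftc, ofReal_integral_eq_lintegral_ofReal hh.integrableOn_Ioc
          (.of_forall fun t => hpos _ _)]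
    _ ≤ ENNReal.ofReal ‖f x - f 0‖ := ENNReal.ofReal_le_ofReal <| by
        simpa [hu] using real_inner_le_norm (f x - f 0) u

end InnerProductSpace

theorem bijective_of_hadamard_levy_general {n : ℕ}
    (f : EuclideanSpace ℝ (Fin n) → EuclideanSpace ℝ (Fin n))
    (hf : ContDiff ℝ 1 f)
    (f' : EuclideanSpace ℝ (Fin n) →
      EuclideanSpace ℝ (Fin n) →L[ℝ] EuclideanSpace ℝ (Fin n))
    (hderiv : ∀ x, HasFDerivAt f (f' x) x)
    (hpos : ∀ x u, u ≠ 0 → 0 < ⟪f' x u, u⟫)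
    (m : ℝ → ℝ)
    (hm : ∀ r : ℝ, m r = sInf {c : ℝ | ∃ x v : EuclideanSpace ℝ (Fin n),
      ‖x‖ = r ∧ ‖v‖ = 1 ∧ c = ⟪f' x v, v⟫})
    (hint : ∫⁻ r in Set.Ioi (0 : ℝ), ENNReal.ofReal (m r) = ⊤) :
    Function.Bijective f := by
  have hfderiv : fderiv ℝ f = f' := funext fun x => (hderiv x).fderiv
  have hstrict : ∀ x, HasStrictFDerivAt f (f' x) x := fun x =>
    hfderiv ▸ hf.contDiffAt.hasStrictFDerivAt one_ne_zero
  have hnonneg : ∀ x u, 0 ≤ ⟪f' x u, u⟫ := fun x u => by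
    rcases eq_or_ne u 0 with rfl | hu
    · simp
    · exact (hpos x u hu).le
  have hm_le : ∀ x v, ‖v‖ = 1 → m ‖x‖ ≤ ⟪f' x v, v⟫ := fun x v hv =>
    hm ‖x‖ ▸ csInf_le ⟨0, by rintro _ ⟨y, w, -, -, rfl⟩; exact hnonneg y w⟩
      ⟨x, v, rfl, hv, rfl⟩
  have hgrow := setLIntegral_Ioc_norm_le_norm_sub hderiv
    (hfderiv ▸ hf.continuous_fderiv one_ne_zero) hnonneg hm_le
  have hproper : IsProperMap f := isProperMap_iff_tendsto_cocompact.2 ⟨hf.continuous, by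
    simpa only [Metric.cobounded_eq_cocompact] using
      tendsto_cobounded_of_setLIntegral_le hint hgrow⟩
  exact ⟨injective_of_inner_fderiv_pos hderiv hpos,
    (isOpenMap_of_inner_fderiv_pos hstrict hpos).surjective_of_isClosedMap hproper.isClosedMap⟩

/-- Hadamard–Levy type criterion.  If `f : ℝⁿ → ℝⁿ` is continuously
differentiable with everywhere symmetric positive definite derivative, and the function
`m(r)`, the infimum over the sphere of radius `r` of the smallest eigenvalue of `Df(x)`
(i.e. the infimum of `⟪Df(x)v, v⟫` over `‖x‖ = r` and unit vectors `v`), satisfies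
`∫₀^∞ m(r) dr = ∞`, then `f` is bijective. -/
theorem bijective_of_hadamard_levy {n : ℕ}
    (f : EuclideanSpace ℝ (Fin n) → EuclideanSpace ℝ (Fin n))
    (hf : ContDiff ℝ 1 f)
    (f' : EuclideanSpace ℝ (Fin n) →
      EuclideanSpace ℝ (Fin n) →L[ℝ] EuclideanSpace ℝ (Fin n))
    (hderiv : ∀ x, HasFDerivAt f (f' x) x)
    (hsymm : ∀ x u v, ⟪f' x u, v⟫ = ⟪u, f' x v⟫)
    (hpos : ∀ x u, u ≠ 0 → 0 < ⟪f' x u, u⟫)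
    (m : ℝ → ℝ)
    (hm : ∀ r : ℝ, m r = sInf {c : ℝ | ∃ x v : EuclideanSpace ℝ (Fin n),
      ‖x‖ = r ∧ ‖v‖ = 1 ∧ c = ⟪f' x v, v⟫})
    (hint : ∫⁻ r in Set.Ioi (0 : ℝ), ENNReal.ofReal (m r) = ⊤) :
    Function.Bijective f :=
  bijective_of_hadamard_levy_general f hf f' hderiv hpos m hm hint
end

section
/- Consider a port-Hamiltonian differential-algebraic equation: let E be a real k×n matrix, J a real k×k matrix, B a real k×m matrix, z, r : ℝ^k → ℝ^k continuous functions (z composed with the state), V ⊆ ℝ^k a linear subspace, and H : ℝ^n → ℝ continuously differentiable. Assume: (i) J is skew-symmetric on V, i.e. vᵀJw = −wᵀJv for all v, w ∈ V; (ii) r is accretive on V, i.e. vᵀr(v) ≥ 0 for all v ∈ V; (iii) ∇H(x) = Eᵀ z(x) for every x with z(x) ∈ V. Let u : [t₀,t₁] → ℝ^m be continuous and let x : [t₀,t₁] → ℝ^n be differentiable with z∘x continuous, satisfying d/dt (E x(t)) = J z(x(t)) − r(z(x(t))) + B u(t) and z(x(t)) ∈ V for all t ∈ [t₀,t₁], and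 set y(t) := Bᵀ z(x(t)). Then H(x(t₁)) − H(x(t₀)) ≤ ∫_{t₀}^{t₁} y(t)ᵀ u(t) dt; moreover H(x(t₁)) − H(x(t₀)) = −∫_{t₀}^{t₁} z(x(t))ᵀ r(z(x(t))) dt + ∫_{t₀}^{t₁} y(t)ᵀ u(t) dt. -/
/-!
Along a solution, the chain rule and `∇H = Eᵀ z` give `d/dt H(x) = zᵀ E ẋ`. Substituting the
dynamics, the term `zᵀ J z` vanishes because `J` is skew on `V ∋ z`, leaving the power balance
`d/dt H(x) = -zᵀ r(z) + yᵀ u`. Integrating gives the energy balance, and accretivity of `r`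
makes the dissipated energy nonnegative.
-/

open Matrix MeasureTheory

theorem ContinuousOn.dotProduct {X ι R : Type*} [TopologicalSpace X] [Fintype ι]
    [TopologicalSpace R] [Mul R] [AddCommMonoid R] [ContinuousAdd R] [ContinuousMul R]
    {s : Set X} {f g : X → ι → R} (hf : ContinuousOn f s) (hg : ContinuousOn g s) :
    ContinuousOn (fun t => f t ⬝ᵥ g t) s :=
  (continuous_fst.dotProduct continuous_snd).comp_continuousOn (hf.prodMk hg)

theorem transpose_mulVec_dotProduct_eq_of_mulVec_eq {κ ι μ R : Type*}
    [Fintype κ] [Fintype ι] [Fintype μ] [CommRing R]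
    {E : Matrix κ ι R} {J : Matrix κ κ R} {B : Matrix κ μ R} {ζ ρ : κ → R} {ξ : ι → R}
    {w : μ → R} (hJ : ζ ⬝ᵥ J *ᵥ ζ = 0) (hξ : E *ᵥ ξ = J *ᵥ ζ - ρ + B *ᵥ w) :
    Eᵀ *ᵥ ζ ⬝ᵥ ξ = -(ζ ⬝ᵥ ρ) + Bᵀ *ᵥ ζ ⬝ᵥ w := by
  simp only [mulVec_transpose, ← dotProduct_mulVec, hξ, dotProduct_add, dotProduct_sub, hJ]
  ring

section EnergyBalance

variable {f p q : ℝ → ℝ} {a b : ℝ}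

theorem sub_eq_neg_integral_add_integral_of_hasDerivAt (hab : a ≤ b)
    (hf : ∀ t ∈ Set.Icc a b, HasDerivAt f (-p t + q t) t)
    (hp : ContinuousOn p (Set.Icc a b)) (hq : ContinuousOn q (Set.Icc a b)) :
    f b - f a = -(∫ t in a..b, p t) + ∫ t in a..b, q t := by
  have hp_int : IntervalIntegrable p volume a b := hp.intervalIntegrable_of_Icc hab
  have hq_int : IntervalIntegrable q volume a b := hq.intervalIntegrable_of_Icc hab
  have hsum_int : IntervalIntegrable (fun t => -p t + q t) volume a b := hp_int.neg.add hq_int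
  calc f b - f a = ∫ t in a..b, (-p t + q t) :=
        (intervalIntegral.integral_eq_sub_of_hasDerivAt (by rwa [Set.uIcc_of_le hab])
          hsum_int).symm
    _ = -(∫ t in a..b, p t) + ∫ t in a..b, q t := by
        rw [intervalIntegral.integral_add (f := fun t => -p t) hp_int.neg hq_int,
          intervalIntegral.integral_neg]

theorem sub_le_integral_of_hasDerivAt (hab : a ≤ b)
    (hf : ∀ t ∈ Set.Icc a b, HasDerivAt f (-p t + q t) t)
    (hp : ContinuousOn p (Set.Icc a b)) (hq : ContinuousOn q (Set.Icc a b))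
    (hp_nonneg : ∀ t ∈ Set.Icc a b, 0 ≤ p t) :
    f b - f a ≤ ∫ t in a..b, q t := by
  rw [sub_eq_neg_integral_add_integral_of_hasDerivAt hab hf hp hq]
  linarith [intervalIntegral.integral_nonneg (μ := volume) hab hp_nonneg]

end EnergyBalance

theorem phdae_energy_balance_general {k n m : ℕ}
    (E : Matrix (Fin k) (Fin n) ℝ) (J : Matrix (Fin k) (Fin k) ℝ)
    (B : Matrix (Fin k) (Fin m) ℝ)
    (z : (Fin n → ℝ) → (Fin k → ℝ)) (r : (Fin k → ℝ) → (Fin k → ℝ))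
    (hr : Continuous r)
    (V : Submodule ℝ (Fin k → ℝ)) (H : (Fin n → ℝ) → ℝ)
    (hJ : ∀ v ∈ V, ∀ w ∈ V, v ⬝ᵥ J.mulVec w = -(w ⬝ᵥ J.mulVec v))
    (hacc : ∀ v ∈ V, 0 ≤ v ⬝ᵥ r v)
    (hH : ContDiff ℝ 1 H)
    (hgrad : ∀ x, z x ∈ V → ∀ w, fderiv ℝ H x w = E.transpose.mulVec (z x) ⬝ᵥ w)
    (t₀ t₁ : ℝ) (ht : t₀ ≤ t₁)
    (u : ℝ → Fin m → ℝ) (hu : ContinuousOn u (Set.Icc t₀ t₁))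
    (x : ℝ → Fin n → ℝ) (x' : ℝ → Fin n → ℝ)
    (hx : ∀ t ∈ Set.Icc t₀ t₁, HasDerivAt x (x' t) t)
    (hzx : ContinuousOn (fun t => z (x t)) (Set.Icc t₀ t₁))
    (hode : ∀ t ∈ Set.Icc t₀ t₁,
      E.mulVec (x' t) = J.mulVec (z (x t)) - r (z (x t)) + B.mulVec (u t))
    (hmem : ∀ t ∈ Set.Icc t₀ t₁, z (x t) ∈ V)
    (y : ℝ → Fin m → ℝ)
    (hy : ∀ t, y t = B.transpose.mulVec (z (x t))) :
    H (x t₁) - H (x t₀) ≤ (∫ t in t₀..t₁, y t ⬝ᵥ u t) ∧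
    H (x t₁) - H (x t₀) =
      -(∫ t in t₀..t₁, z (x t) ⬝ᵥ r (z (x t))) + ∫ t in t₀..t₁, y t ⬝ᵥ u t := by
  have power_balance : ∀ t ∈ Set.Icc t₀ t₁,
      HasDerivAt (fun s => H (x s)) (-(z (x t) ⬝ᵥ r (z (x t))) + y t ⬝ᵥ u t) t := by
    intro t ht
    rw [hy, ← transpose_mulVec_dotProduct_eq_of_mulVec_eq
      (self_eq_neg.mp (hJ _ (hmem t ht) _ (hmem t ht))) (hode t ht),
      ← hgrad _ (hmem t ht)]
    exact (hH.differentiable one_ne_zero (x t)).hasFDerivAt.comp_hasDerivAt t (hx t ht)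
  have dissipation_cont := hzx.dotProduct (hr.comp_continuousOn hzx)
  have supply_cont : ContinuousOn (fun t => y t ⬝ᵥ u t) (Set.Icc t₀ t₁) := by
    simp_rw [hy]
    exact ((continuous_const.matrix_mulVec continuous_id).comp_continuousOn hzx).dotProduct hu
  exact ⟨sub_le_integral_of_hasDerivAt ht power_balance dissipation_cont supply_cont
      fun t ht => hacc _ (hmem t ht),
    sub_eq_neg_integral_add_integral_of_hasDerivAt ht power_balance dissipation_cont supply_cont⟩

/-- Energy balance for a port-Hamiltonian DAE
`d/dt (E x) = J z(x) − r(z(x)) + B u`, `y = Bᵀ z(x)`: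
`H(x(t₁)) − H(x(t₀)) ≤ ∫ yᵀu`, and in fact
`H(x(t₁)) − H(x(t₀)) = −∫ z(x)ᵀ r(z(x)) + ∫ yᵀu`. -/
theorem phdae_energy_balance {k n m : ℕ}
    (E : Matrix (Fin k) (Fin n) ℝ) (J : Matrix (Fin k) (Fin k) ℝ)
    (B : Matrix (Fin k) (Fin m) ℝ)
    (z : (Fin n → ℝ) → (Fin k → ℝ)) (r : (Fin k → ℝ) → (Fin k → ℝ))
    (hz : Continuous z) (hr : Continuous r)
    (V : Submodule ℝ (Fin k → ℝ)) (H : (Fin n → ℝ) → ℝ)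
    (hJ : ∀ v ∈ V, ∀ w ∈ V, v ⬝ᵥ J.mulVec w = -(w ⬝ᵥ J.mulVec v))
    (hacc : ∀ v ∈ V, 0 ≤ v ⬝ᵥ r v)
    (hH : ContDiff ℝ 1 H)
    (hgrad : ∀ x, z x ∈ V → ∀ w, fderiv ℝ H x w = E.transpose.mulVec (z x) ⬝ᵥ w)
    (t₀ t₁ : ℝ) (ht : t₀ ≤ t₁)
    (u : ℝ → Fin m → ℝ) (hu : ContinuousOn u (Set.Icc t₀ t₁))
    (x : ℝ → Fin n → ℝ) (x' : ℝ → Fin n → ℝ)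
    (hx : ∀ t ∈ Set.Icc t₀ t₁, HasDerivAt x (x' t) t)
    (hzx : ContinuousOn (fun t => z (x t)) (Set.Icc t₀ t₁))
    (hode : ∀ t ∈ Set.Icc t₀ t₁,
      E.mulVec (x' t) = J.mulVec (z (x t)) - r (z (x t)) + B.mulVec (u t))
    (hmem : ∀ t ∈ Set.Icc t₀ t₁, z (x t) ∈ V)
    (y : ℝ → Fin m → ℝ)
    (hy : ∀ t, y t = B.transpose.mulVec (z (x t))) :
    H (x t₁) - H (x t₀) ≤ (∫ t in t₀..t₁, y t ⬝ᵥ u t) ∧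
    H (x t₁) - H (x t₀) =
      -(∫ t in t₀..t₁, z (x t) ⬝ᵥ r (z (x t))) + ∫ t in t₀..t₁, y t ⬝ᵥ u t :=
  phdae_energy_balance_general E J B z r hr V H hJ hacc hH hgrad t₀ t₁ ht u hu x x' hx hzx hode hmem
    y hy
end

section
/- (Energy balance for circuit model 2.) Let A_C ∈ ℝ^{n×n_C}, A_R ∈ ℝ^{n×n_R}, A_L ∈ ℝ^{n×n_L}, A_V ∈ ℝ^{n×n_V}, A_I ∈ ℝ^{n×n_I} be real matrices. Let q : ℝ^{n_C} → ℝ^{n_C} and φ : ℝ^{n_L} → ℝ^{n_L} be bijections, let V_C, V_L be differentiable functions with ∇V_C = q⁻¹ and ∇V_L = φ⁻¹, and let g : ℝ^{n_R} → ℝ^{n_R} be continuous with ⟪g(u_R), u_R⟫ ≥ 0 for all u_R. Let i_s : [t₀,t₁] → ℝ^{n_I} and v_s : [t₀,t₁] → ℝ^{n_V} be continuous, and let e, j_C, q_C, φ_L, j_V be functions on [t₀,t₁], with q_C and φ_L differentiable and all functions continuous, satisfying for all t: A_C j_C(t) + A_R g(A_Rᵀ e(t)) + A_L φ⁻¹(φ_L(t))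 + A_V j_V(t) + A_I i_s(t) = 0; A_Cᵀ e(t) − q⁻¹(q_C(t)) = 0; q̇_C(t) = j_C(t); φ̇_L(t) = A_Lᵀ e(t); and A_Vᵀ e(t) = v_s(t). Then with H(t) := V_C(q_C(t)) + V_L(φ_L(t)) one has H(t₁) − H(t₀) ≤ ∫_{t₀}^{t₁} ( −i_s(t)ᵀ A_Iᵀ e(t) − v_s(t)ᵀ j_V(t) ) dt. -/
open Matrix MeasureTheory

/-!
By the chain rule and `∇V_C = q⁻¹`, `∇V_L = φ⁻¹`, the derivative of `H` along a solution is
`(A_Cᵀ e)ᵀ j_C + φ⁻¹(φ_L)ᵀ A_Lᵀ e`. Pairing Kirchhoff's current law with `e` (Tellegen's theorem)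
rewrites this as the power supplied by the sources minus the resistive dissipation
`g(A_Rᵀ e)ᵀ A_Rᵀ e ≥ 0`, so `Ḣ` is bounded by the supplied power; integrate.
-/

theorem power_balance_of_kcl {N C R L V I : Type*} [Fintype N] [Fintype C] [Fintype R] [Fintype L]
    [Fintype V] [Fintype I] (AC : Matrix N C ℝ) (AR : Matrix N R ℝ) (AL : Matrix N L ℝ)
    (AV : Matrix N V ℝ) (AI : Matrix N I ℝ) (e : N → ℝ) (jC : C → ℝ) (jR : R → ℝ) (jL : L → ℝ)
    (jV : V → ℝ) (iS : I → ℝ)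
    (hKCL : AC *ᵥ jC + AR *ᵥ jR + AL *ᵥ jL + AV *ᵥ jV + AI *ᵥ iS = 0) :
    ACᵀ *ᵥ e ⬝ᵥ jC + jL ⬝ᵥ ALᵀ *ᵥ e =
      -(iS ⬝ᵥ AIᵀ *ᵥ e) - AVᵀ *ᵥ e ⬝ᵥ jV - jR ⬝ᵥ ARᵀ *ᵥ e := by
  have tellegen := congrArg (e ⬝ᵥ ·) hKCL
  simp only [dotProduct_add, dotProduct_zero] at tellegen
  rw [← dotProduct_transpose_mulVec AC, ← dotProduct_transpose_mulVec AR,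
    ← dotProduct_transpose_mulVec AL, ← dotProduct_transpose_mulVec AV,
    ← dotProduct_transpose_mulVec AI] at tellegen
  rw [dotProduct_comm (ACᵀ *ᵥ e), dotProduct_comm (AVᵀ *ᵥ e)]
  linarith

theorem HasDerivAt.comp_of_fderiv_eq_dotProduct {ι : Type*} [Fintype ι] {V : (ι → ℝ) → ℝ}
    {G : (ι → ℝ) → ι → ℝ} (hV : Differentiable ℝ V) (hG : ∀ x w, fderiv ℝ V x w = G x ⬝ᵥ w)
    {x : ℝ → ι → ℝ} {x' : ι → ℝ} {t : ℝ} (hx : HasDerivAt x x' t) :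
    HasDerivAt (fun s => V (x s)) (G (x t) ⬝ᵥ x') t := by
  have := (hV (x t)).hasFDerivAt.comp_hasDerivAt t hx
  rw [hG] at this
  exact this

theorem circuit_model2_energy_balance_general {n nC nR nL nV nI : ℕ}
    (AC : Matrix (Fin n) (Fin nC) ℝ) (AR : Matrix (Fin n) (Fin nR) ℝ)
    (AL : Matrix (Fin n) (Fin nL) ℝ) (AV : Matrix (Fin n) (Fin nV) ℝ)
    (AI : Matrix (Fin n) (Fin nI) ℝ)
    (q : (Fin nC → ℝ) → (Fin nC → ℝ)) (φ : (Fin nL → ℝ) → (Fin nL → ℝ))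
    (VC : (Fin nC → ℝ) → ℝ) (VL : (Fin nL → ℝ) → ℝ)
    (hVC : Differentiable ℝ VC) (hVL : Differentiable ℝ VL)
    (hVCgrad : ∀ qc w, fderiv ℝ VC qc w = Function.invFun q qc ⬝ᵥ w)
    (hVLgrad : ∀ φl w, fderiv ℝ VL φl w = Function.invFun φ φl ⬝ᵥ w)
    (g : (Fin nR → ℝ) → (Fin nR → ℝ))
    (hgacc : ∀ uR, 0 ≤ g uR ⬝ᵥ uR)
    (t₀ t₁ : ℝ) (ht : t₀ ≤ t₁)
    (is : ℝ → Fin nI → ℝ) (vs : ℝ → Fin nV → ℝ)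
    (his : ContinuousOn is (Set.Icc t₀ t₁)) (hvs : ContinuousOn vs (Set.Icc t₀ t₁))
    (e : ℝ → Fin n → ℝ) (jC : ℝ → Fin nC → ℝ)
    (qC : ℝ → Fin nC → ℝ) (φL : ℝ → Fin nL → ℝ) (jV : ℝ → Fin nV → ℝ)
    (qC' : ℝ → Fin nC → ℝ) (φL' : ℝ → Fin nL → ℝ)
    (hqC : ∀ t ∈ Set.Icc t₀ t₁, HasDerivAt qC (qC' t) t)
    (hφL : ∀ t ∈ Set.Icc t₀ t₁, HasDerivAt φL (φL' t) t)
    (he : ContinuousOn e (Set.Icc t₀ t₁))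
    (hjVc : ContinuousOn jV (Set.Icc t₀ t₁))
    (hKCL : ∀ t ∈ Set.Icc t₀ t₁,
      AC.mulVec (jC t) + AR.mulVec (g (AR.transpose.mulVec (e t))) +
        AL.mulVec (Function.invFun φ (φL t)) + AV.mulVec (jV t) +
        AI.mulVec (is t) = 0)
    (hcharge : ∀ t ∈ Set.Icc t₀ t₁,
      AC.transpose.mulVec (e t) - Function.invFun q (qC t) = 0)
    (hqdot : ∀ t ∈ Set.Icc t₀ t₁, qC' t = jC t)
    (hflux : ∀ t ∈ Set.Icc t₀ t₁, φL' t = AL.transpose.mulVec (e t))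
    (hvolt : ∀ t ∈ Set.Icc t₀ t₁, AV.transpose.mulVec (e t) = vs t) :
    (VC (qC t₁) + VL (φL t₁)) - (VC (qC t₀) + VL (φL t₀)) ≤
      ∫ t in t₀..t₁,
        (-(is t ⬝ᵥ AI.transpose.mulVec (e t)) - vs t ⬝ᵥ jV t) := by
  set P : ℝ → ℝ := fun t => -(is t ⬝ᵥ AIᵀ *ᵥ e t) - vs t ⬝ᵥ jV t
  have power_balance : ∀ t ∈ Set.Icc t₀ t₁, HasDerivAt (fun s => VC (qC s) + VL (φL s))
      (P t - g (ARᵀ *ᵥ e t) ⬝ᵥ ARᵀ *ᵥ e t) t := by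
    intro t ht
    refine (((hqC t ht).comp_of_fderiv_eq_dotProduct hVC hVCgrad).add
      ((hφL t ht).comp_of_fderiv_eq_dotProduct hVL hVLgrad)).congr_deriv ?_
    rw [← sub_eq_zero.mp (hcharge t ht), hqdot t ht, hflux t ht,
      power_balance_of_kcl AC AR AL AV AI (e t) _ _ _ _ _ (hKCL t ht), hvolt t ht]
  have hP_cont : ContinuousOn P (Set.Icc t₀ t₁) := by
    rw [continuousOn_iff_continuous_domRestrict] at his hvs he hjVc ⊢
    exact ((his.dotProduct (continuous_const.matrix_mulVec he)).neg).sub (hvs.dotProduct hjVc)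
  refine intervalIntegral.sub_le_integral_of_hasDeriv_right_of_le ht
    (fun t ht => (power_balance t ht).continuousAt.continuousWithinAt)
    (fun t ht => (power_balance t (Set.Ioo_subset_Icc_self ht)).hasDerivWithinAt)
    hP_cont.integrableOn_Icc (fun t _ => ?_)
  linarith [hgacc (ARᵀ *ᵥ e t)]

/-- Energy balance for circuit model 2 (with capacitive currents `j_C`):
along any solution of the circuit equations, the Hamiltonian
`H = V_C(q_C) + V_L(φ_L)` satisfies
`H(t₁) − H(t₀) ≤ ∫ (−i_sᵀ A_Iᵀ e − v_sᵀ j_V)`. -/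
theorem circuit_model2_energy_balance {n nC nR nL nV nI : ℕ}
    (AC : Matrix (Fin n) (Fin nC) ℝ) (AR : Matrix (Fin n) (Fin nR) ℝ)
    (AL : Matrix (Fin n) (Fin nL) ℝ) (AV : Matrix (Fin n) (Fin nV) ℝ)
    (AI : Matrix (Fin n) (Fin nI) ℝ)
    (q : (Fin nC → ℝ) → (Fin nC → ℝ)) (φ : (Fin nL → ℝ) → (Fin nL → ℝ))
    (hq : Function.Bijective q) (hφ : Function.Bijective φ)
    (VC : (Fin nC → ℝ) → ℝ) (VL : (Fin nL → ℝ) → ℝ)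
    (hVC : Differentiable ℝ VC) (hVL : Differentiable ℝ VL)
    (hVCgrad : ∀ qc w, fderiv ℝ VC qc w = Function.invFun q qc ⬝ᵥ w)
    (hVLgrad : ∀ φl w, fderiv ℝ VL φl w = Function.invFun φ φl ⬝ᵥ w)
    (g : (Fin nR → ℝ) → (Fin nR → ℝ)) (hg : Continuous g)
    (hgacc : ∀ uR, 0 ≤ g uR ⬝ᵥ uR)
    (t₀ t₁ : ℝ) (ht : t₀ ≤ t₁)
    (is : ℝ → Fin nI → ℝ) (vs : ℝ → Fin nV → ℝ)
    (his : ContinuousOn is (Set.Icc t₀ t₁)) (hvs : ContinuousOn vs (Set.Icc t₀ t₁))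
    (e : ℝ → Fin n → ℝ) (jC : ℝ → Fin nC → ℝ)
    (qC : ℝ → Fin nC → ℝ) (φL : ℝ → Fin nL → ℝ) (jV : ℝ → Fin nV → ℝ)
    (qC' : ℝ → Fin nC → ℝ) (φL' : ℝ → Fin nL → ℝ)
    (hqC : ∀ t ∈ Set.Icc t₀ t₁, HasDerivAt qC (qC' t) t)
    (hφL : ∀ t ∈ Set.Icc t₀ t₁, HasDerivAt φL (φL' t) t)
    (he : ContinuousOn e (Set.Icc t₀ t₁))
    (hjC : ContinuousOn jC (Set.Icc t₀ t₁))
    (hqCc : ContinuousOn qC (Set.Icc t₀ t₁))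
    (hφLc : ContinuousOn φL (Set.Icc t₀ t₁))
    (hjVc : ContinuousOn jV (Set.Icc t₀ t₁))
    (hKCL : ∀ t ∈ Set.Icc t₀ t₁,
      AC.mulVec (jC t) + AR.mulVec (g (AR.transpose.mulVec (e t))) +
        AL.mulVec (Function.invFun φ (φL t)) + AV.mulVec (jV t) +
        AI.mulVec (is t) = 0)
    (hcharge : ∀ t ∈ Set.Icc t₀ t₁,
      AC.transpose.mulVec (e t) - Function.invFun q (qC t) = 0)
    (hqdot : ∀ t ∈ Set.Icc t₀ t₁, qC' t = jC t)
    (hflux : ∀ t ∈ Set.Icc t₀ t₁, φL' t = AL.transpose.mulVec (e t))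
    (hvolt : ∀ t ∈ Set.Icc t₀ t₁, AV.transpose.mulVec (e t) = vs t) :
    (VC (qC t₁) + VL (φL t₁)) - (VC (qC t₀) + VL (φL t₀)) ≤
      ∫ t in t₀..t₁,
        (-(is t ⬝ᵥ AI.transpose.mulVec (e t)) - vs t ⬝ᵥ jV t) :=
  circuit_model2_energy_balance_general AC AR AL AV AI q φ VC VL hVC hVL hVCgrad hVLgrad g hgacc t₀
    t₁ ht is vs his hvs e jC qC φL jV qC' φL' hqC hφL he hjVc hKCL hcharge hqdot hflux hvolt
end

section
/- (Structure-preserving interconnection of multiply coupled PH-DAEs.) Let N ≥ 2 and for each i ∈ {1,…,N} let E_i ∈ ℝ^{k_i×n_i}, J_i ∈ ℝ^{k_i×k_i}, B̂_i ∈ ℝ^{k_i×m̂_i}, B̄_i ∈ ℝ^{k_i×m̄_i}, let z_i : ℝ^{n_i} → ℝ^{k_i} and r_i : ℝ^{k_i} → ℝ^{k_i} be continuous, let V_i ⊆ ℝ^{k_i} be a subspace on which J_i is skew-symmetric (vᵀJ_i w = −wᵀJ_i v for v,w ∈ V_i) and r_i is accretive (vᵀr_i(v) ≥ 0 for v ∈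 V_i), and let H_i be continuously differentiable with ∇H_i(x) = E_iᵀ z_i(x) whenever z_i(x) ∈ V_i. Let Ĉ_{i,j} ∈ ℝ^{m̂_i×m̂_j} for i ≠ j satisfy the skew-symmetry condition Ĉ_{j,i} = −Ĉ_{i,j}ᵀ. Suppose on [t₀,t₁] each x_i is differentiable with z_i∘x_i continuous and z_i(x_i(t)) ∈ V_i, each ū_i is continuous, and d/dt (E_i x_i(t)) = J_i z_i(x_i(t)) − r_i(z_i(x_i(t))) + B̂_i û_i(t) + B̄_i ū_i(t), where ŷ_j(t) := B̂_jᵀ z_j(x_j(t)) and the coupling û_i(t) + Σ_{j≠i} Ĉ_{i,j} ŷ_j(t) = 0 holds. Then the total Hamiltonian H := Σ_i H_i satisfies Σ_i H_i(x_i(t₁)) − Σ_i H_i(x_i(t₀)) ≤ ∫_{t₀}^{t₁} Σ_i ū_i(t)ᵀ B̄_iᵀ z_i(x_i(t)) dt. -/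
open Matrix MeasureTheory

/-!
Along a solution, the chain rule and `∇Hᵢ = Eᵢᵀ zᵢ` give `d/dt Hᵢ(xᵢ) = zᵢᵀ Eᵢ ẋᵢ`; inserting the
subsystem equation, skew-symmetry of `Jᵢ` and accretivity of `rᵢ` on `Vᵢ` bound this by
`ŷᵢᵀ ûᵢ + ūᵢᵀ ȳᵢ`. Summing over `i`, the coupling terms `Σᵢ ŷᵢᵀ ûᵢ = -Σᵢ Σ_{j≠i} ŷᵢᵀ Ĉᵢⱼ ŷⱼ`
cancel in pairs by skew-symmetry of `Ĉ`, and integrating the resulting differential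
inequality gives the energy balance.
-/

theorem sum_sum_erase_eq_zero_of_antisymm {ι M : Type*} [Fintype ι] [DecidableEq ι]
    [AddCommGroup M] (a : ι → ι → M) (ha : ∀ i j, i ≠ j → a j i = -a i j) :
    ∑ i, ∑ j ∈ Finset.univ.erase i, a i j = 0 := by
  rw [Finset.sum_sigma']
  refine Finset.sum_involution (fun p _ => ⟨p.2, p.1⟩) ?_ ?_ ?_ ?_ <;>
    simp only [Finset.mem_sigma, Finset.mem_univ, Finset.mem_erase, true_and, and_true, ne_eq]
  · rintro ⟨i, j⟩ hij
    simp [ha i j (Ne.symm hij)]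
  · rintro ⟨i, j⟩ hij - h
    simp_all
  · exact fun p hp => Ne.symm hp
  · exact fun _ _ => trivial

theorem sum_dotProduct_eq_zero_of_skew_coupling {ι R : Type*} [Fintype ι] [DecidableEq ι]
    [CommRing R] {m : ι → Type*} [∀ i, Fintype (m i)]
    (C : ∀ i j, Matrix (m i) (m j) R) (hC : ∀ i j, i ≠ j → C j i = -(C i j)ᵀ)
    (y u : ∀ i, m i → R) (hcouple : ∀ i, u i + ∑ j ∈ Finset.univ.erase i, C i j *ᵥ y j = 0) :
    ∑ i, y i ⬝ᵥ u i = 0 := by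
  have hu : ∀ i, u i = -∑ j ∈ Finset.univ.erase i, C i j *ᵥ y j :=
    fun i => eq_neg_of_add_eq_zero_left (hcouple i)
  calc ∑ i, y i ⬝ᵥ u i = -∑ i, ∑ j ∈ Finset.univ.erase i, y i ⬝ᵥ C i j *ᵥ y j := by
        simp only [hu, dotProduct_neg, dotProduct_sum, Finset.sum_neg_distrib]
    _ = 0 := by
      rw [sum_sum_erase_eq_zero_of_antisymm _ fun i j hij => ?_, neg_zero]
      rw [hC i j hij, neg_mulVec, dotProduct_neg, dotProduct_mulVec, vecMul_transpose,
        dotProduct_comm]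

theorem phdae_power_le_port_supply {R k n mh mb : Type*} [CommRing R] [LinearOrder R]
    [IsStrictOrderedRing R] [Fintype k] [Fintype n] [Fintype mh] [Fintype mb]
    (E : Matrix k n R) (J : Matrix k k R) (Bh : Matrix k mh R) (Bb : Matrix k mb R)
    {z rz : k → R} {x' : n → R} {uh : mh → R} {ub : mb → R}
    (hJ : z ⬝ᵥ J *ᵥ z = 0) (hr : 0 ≤ z ⬝ᵥ rz)
    (hode : E *ᵥ x' = J *ᵥ z - rz + Bh *ᵥ uh + Bb *ᵥ ub) :
    Eᵀ *ᵥ z ⬝ᵥ x' ≤ Bhᵀ *ᵥ z ⬝ᵥ uh + ub ⬝ᵥ Bbᵀ *ᵥ z := by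
  have hpower : Eᵀ *ᵥ z ⬝ᵥ x' =
      z ⬝ᵥ J *ᵥ z - z ⬝ᵥ rz + Bhᵀ *ᵥ z ⬝ᵥ uh + ub ⬝ᵥ Bbᵀ *ᵥ z := by
    rw [mulVec_transpose, ← dotProduct_mulVec, hode, dotProduct_add, dotProduct_add,
      dotProduct_sub, dotProduct_mulVec z Bh, ← mulVec_transpose, dotProduct_mulVec z Bb,
      ← mulVec_transpose, dotProduct_comm _ ub]
  linarith

theorem multiply_coupled_phdae_energy_balance_general {N : ℕ}
    (k n mh mb : Fin N → ℕ)
    (E : ∀ i, Matrix (Fin (k i)) (Fin (n i)) ℝ)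
    (J : ∀ i, Matrix (Fin (k i)) (Fin (k i)) ℝ)
    (Bh : ∀ i, Matrix (Fin (k i)) (Fin (mh i)) ℝ)
    (Bb : ∀ i, Matrix (Fin (k i)) (Fin (mb i)) ℝ)
    (z : ∀ i, (Fin (n i) → ℝ) → (Fin (k i) → ℝ))
    (r : ∀ i, (Fin (k i) → ℝ) → (Fin (k i) → ℝ))
    (V : ∀ i, Submodule ℝ (Fin (k i) → ℝ))
    (hJ : ∀ i, ∀ v ∈ V i, ∀ w ∈ V i,
      v ⬝ᵥ (J i).mulVec w = -(w ⬝ᵥ (J i).mulVec v))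
    (hacc : ∀ i, ∀ v ∈ V i, 0 ≤ v ⬝ᵥ r i v)
    (H : ∀ i, (Fin (n i) → ℝ) → ℝ)
    (hH : ∀ i, ContDiff ℝ 1 (H i))
    (hgrad : ∀ i x, z i x ∈ V i →
      ∀ w, fderiv ℝ (H i) x w = (E i).transpose.mulVec (z i x) ⬝ᵥ w)
    (C : ∀ i j, Matrix (Fin (mh i)) (Fin (mh j)) ℝ)
    (hC : ∀ i j, i ≠ j → C j i = -(C i j).transpose)
    (t₀ t₁ : ℝ) (ht : t₀ ≤ t₁)
    (x : ∀ i, ℝ → Fin (n i) → ℝ) (x' : ∀ i, ℝ → Fin (n i) → ℝ)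
    (uh : ∀ i, ℝ → Fin (mh i) → ℝ) (ub : ∀ i, ℝ → Fin (mb i) → ℝ)
    (hx : ∀ i, ∀ t ∈ Set.Icc t₀ t₁, HasDerivAt (x i) (x' i t) t)
    (hzx : ∀ i, ContinuousOn (fun t => z i (x i t)) (Set.Icc t₀ t₁))
    (hmem : ∀ i, ∀ t ∈ Set.Icc t₀ t₁, z i (x i t) ∈ V i)
    (hub : ∀ i, ContinuousOn (ub i) (Set.Icc t₀ t₁))
    (yh : ∀ i, ℝ → Fin (mh i) → ℝ)
    (hyh : ∀ i t, yh i t = (Bh i).transpose.mulVec (z i (x i t)))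
    (hcouple : ∀ i, ∀ t ∈ Set.Icc t₀ t₁,
      uh i t + ∑ j ∈ Finset.univ.erase i, (C i j).mulVec (yh j t) = 0)
    (hode : ∀ i, ∀ t ∈ Set.Icc t₀ t₁,
      (E i).mulVec (x' i t) = (J i).mulVec (z i (x i t)) - r i (z i (x i t)) +
        (Bh i).mulVec (uh i t) + (Bb i).mulVec (ub i t)) :
    (∑ i, H i (x i t₁)) - (∑ i, H i (x i t₀)) ≤
      ∫ t in t₀..t₁, ∑ i, ub i t ⬝ᵥ (Bb i).transpose.mulVec (z i (x i t)) := by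
  have hderiv : ∀ t ∈ Set.Icc t₀ t₁, HasDerivAt (fun t => ∑ i, H i (x i t))
      (∑ i, fderiv ℝ (H i) (x i t) (x' i t)) t := fun t hts =>
    HasDerivAt.fun_sum fun i _ =>
      ((hH i).differentiable one_ne_zero _).hasFDerivAt.comp_hasDerivAt t (hx i t hts)
  have hpower : ∀ t ∈ Set.Icc t₀ t₁, ∑ i, fderiv ℝ (H i) (x i t) (x' i t) ≤
      ∑ i, ub i t ⬝ᵥ (Bb i)ᵀ *ᵥ z i (x i t) := fun t hts =>
    calc ∑ i, fderiv ℝ (H i) (x i t) (x' i t)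
        ≤ ∑ i, (yh i t ⬝ᵥ uh i t + ub i t ⬝ᵥ (Bb i)ᵀ *ᵥ z i (x i t)) :=
          Finset.sum_le_sum fun i _ => by
            have hz := hmem i t hts
            rw [hgrad i _ hz, hyh]
            exact phdae_power_le_port_supply _ _ _ _ (by linarith [hJ i _ hz _ hz])
              (hacc i _ hz) (hode i t hts)
      _ = ∑ i, ub i t ⬝ᵥ (Bb i)ᵀ *ᵥ z i (x i t) := by
          rw [Finset.sum_add_distrib,
            sum_dotProduct_eq_zero_of_skew_coupling C hC _ _ (hcouple · t hts), zero_add]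
  have hsupply : ∀ i, ContinuousOn (fun t => (Bb i)ᵀ *ᵥ z i (x i t)) (Set.Icc t₀ t₁) := fun i =>
    (continuous_const.matrix_mulVec continuous_id).comp_continuousOn (hzx i)
  exact intervalIntegral.sub_le_integral_of_hasDeriv_right_of_le ht
    (fun t hts => (hderiv t hts).continuousAt.continuousWithinAt)
    (fun t hts => (hderiv t (Set.Ioo_subset_Icc_self hts)).hasDerivWithinAt)
    (ContinuousOn.integrableOn_Icc (by fun_prop))
    (fun t hts => hpower t (Set.Ioo_subset_Icc_self hts))

/-- Structure-preserving interconnection of `N ≥ 2` port-Hamiltonian DAEs.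
If the subsystems `d/dt (Eᵢ xᵢ) = Jᵢ zᵢ(xᵢ) − rᵢ(zᵢ(xᵢ)) + B̂ᵢ ûᵢ + B̄ᵢ ūᵢ` are coupled by
`ûᵢ + Σ_{j≠i} Ĉ_{i,j} ŷⱼ = 0`, `ŷⱼ = B̂ⱼᵀ zⱼ(xⱼ)`, with skew-symmetric aggregated coupling
matrix (`Ĉ_{j,i} = −Ĉ_{i,j}ᵀ`), then the total Hamiltonian `H = Σᵢ Hᵢ` satisfies the
energy balance with respect to the external ports only. -/
theorem multiply_coupled_phdae_energy_balance {N : ℕ} (hN : 2 ≤ N)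
    (k n mh mb : Fin N → ℕ)
    (E : ∀ i, Matrix (Fin (k i)) (Fin (n i)) ℝ)
    (J : ∀ i, Matrix (Fin (k i)) (Fin (k i)) ℝ)
    (Bh : ∀ i, Matrix (Fin (k i)) (Fin (mh i)) ℝ)
    (Bb : ∀ i, Matrix (Fin (k i)) (Fin (mb i)) ℝ)
    (z : ∀ i, (Fin (n i) → ℝ) → (Fin (k i) → ℝ))
    (r : ∀ i, (Fin (k i) → ℝ) → (Fin (k i) → ℝ))
    (hz : ∀ i, Continuous (z i)) (hr : ∀ i, Continuous (r i))
    (V : ∀ i, Submodule ℝ (Fin (k i) → ℝ))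
    (hJ : ∀ i, ∀ v ∈ V i, ∀ w ∈ V i,
      v ⬝ᵥ (J i).mulVec w = -(w ⬝ᵥ (J i).mulVec v))
    (hacc : ∀ i, ∀ v ∈ V i, 0 ≤ v ⬝ᵥ r i v)
    (H : ∀ i, (Fin (n i) → ℝ) → ℝ)
    (hH : ∀ i, ContDiff ℝ 1 (H i))
    (hgrad : ∀ i x, z i x ∈ V i →
      ∀ w, fderiv ℝ (H i) x w = (E i).transpose.mulVec (z i x) ⬝ᵥ w)
    (C : ∀ i j, Matrix (Fin (mh i)) (Fin (mh j)) ℝ)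
    (hC : ∀ i j, i ≠ j → C j i = -(C i j).transpose)
    (t₀ t₁ : ℝ) (ht : t₀ ≤ t₁)
    (x : ∀ i, ℝ → Fin (n i) → ℝ) (x' : ∀ i, ℝ → Fin (n i) → ℝ)
    (uh : ∀ i, ℝ → Fin (mh i) → ℝ) (ub : ∀ i, ℝ → Fin (mb i) → ℝ)
    (hx : ∀ i, ∀ t ∈ Set.Icc t₀ t₁, HasDerivAt (x i) (x' i t) t)
    (hzx : ∀ i, ContinuousOn (fun t => z i (x i t)) (Set.Icc t₀ t₁))
    (hmem : ∀ i, ∀ t ∈ Set.Icc t₀ t₁, z i (x i t) ∈ V i)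
    (hub : ∀ i, ContinuousOn (ub i) (Set.Icc t₀ t₁))
    (yh : ∀ i, ℝ → Fin (mh i) → ℝ)
    (hyh : ∀ i t, yh i t = (Bh i).transpose.mulVec (z i (x i t)))
    (hcouple : ∀ i, ∀ t ∈ Set.Icc t₀ t₁,
      uh i t + ∑ j ∈ Finset.univ.erase i, (C i j).mulVec (yh j t) = 0)
    (hode : ∀ i, ∀ t ∈ Set.Icc t₀ t₁,
      (E i).mulVec (x' i t) = (J i).mulVec (z i (x i t)) - r i (z i (x i t)) +
        (Bh i).mulVec (uh i t) + (Bb i).mulVec (ub i t)) :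
    (∑ i, H i (x i t₁)) - (∑ i, H i (x i t₀)) ≤
      ∫ t in t₀..t₁, ∑ i, ub i t ⬝ᵥ (Bb i).transpose.mulVec (z i (x i t)) :=
  multiply_coupled_phdae_energy_balance_general k n mh mb E J Bh Bb z r V hJ hacc H hH hgrad C hC t₀
    t₁ ht x x' uh ub hx hzx hmem hub yh hyh hcouple hode
end

section
/- (Kernel characterization underlying the index-one criterion for the first circuit model.) Let A_C ∈ ℝ^{n×n_C}, A_R ∈ ℝ^{n×n_R}, A_V ∈ ℝ^{n×n_V} be real matrices, let C ∈ ℝ^{n_C×n_C} be symmetric positive definite, let G ∈ ℝ^{n_R×n_R} satisfy that G + Gᵀ is positive definite, let Z_C be an injective matrix whose range equals ker(A_Cᵀ), and let Z_C' be an injective matrix whose range equals range(A_C). Consider the linear map Ẽ sending (x₁, x₂, x₃, x₄) ∈ ℝ^{n_C} × ℝ^{n_L} × ℝ^{n} × ℝ^{n_V} to ( −Z_Cᵀ A_R G A_Rᵀ x₃ − Z_Cᵀ A_V x₄, −(Z_C')ᵀ A_C C A_Cᵀ x₃, x₂, C⁻¹ x₁ + A_Cᵀ x₃, A_Vᵀ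 x₃ ). Then Ẽ is injective if and only if both ker( (A_C A_R A_V)ᵀ ) = {0} (i.e. the horizontally concatenated matrix (A_C A_R A_V) has full row rank) and ker(Z_Cᵀ A_V) = {0}. -/
/-! `Ẽ` is additive, so only its kernel matters. If `Ẽ x = 0`, then `A_C C A_Cᵀ x₃` lies in
`range A_C = range Z_C'` and is killed by `Z_C'ᵀ`, hence vanishes; pairing with `x₃` and using
that `C` is positive definite gives `A_Cᵀ x₃ = 0`, so `C⁻¹ x₁ = 0` and `x₃ = Z_C z`. Pairing the
first component with `z` and using `A_Vᵀ x₃ = 0` leaves `(A_Rᵀ x₃)ᵀ G (A_Rᵀ x₃) = 0`, so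
`A_Rᵀ x₃ = 0`. The two kernel conditions then give `x₃ = 0` and `x₄ = 0`. -/

open Matrix

theorem injective_iff_eq_zero_of_map_add {α β : Type*} [AddGroup α] [AddGroup β] {f : α → β}
    (hf : ∀ a b, f (a + b) = f a + f b) : Function.Injective f ↔ ∀ x, f x = 0 → x = 0 :=
  injective_iff_map_eq_zero (AddMonoidHom.mk' f hf)

namespace Matrix

variable {l m n : Type*} [Fintype l] [Fintype m] [Fintype n]

theorem eq_zero_of_dotProduct_mulVec_self_eq_zero {C : Matrix n n ℝ}
    (hC : ∀ x : n → ℝ, x ≠ 0 → 0 < x ⬝ᵥ C *ᵥ x) {x : n → ℝ} (h : x ⬝ᵥ C *ᵥ x = 0) : x = 0 := by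
  by_contra hx
  exact (hC x hx).ne' h

theorem isUnit_of_forall_dotProduct_mulVec_pos [DecidableEq n] {C : Matrix n n ℝ}
    (hC : ∀ x : n → ℝ, x ≠ 0 → 0 < x ⬝ᵥ C *ᵥ x) : IsUnit C := by
  refine mulVec_injective_iff_isUnit.mp fun x y hxy => sub_eq_zero.mp ?_
  refine eq_zero_of_dotProduct_mulVec_self_eq_zero hC ?_
  rw [mulVec_sub, hxy, sub_self, dotProduct_zero]

theorem dotProduct_add_transpose_mulVec_self (G : Matrix n n ℝ) (y : n → ℝ) :
    y ⬝ᵥ (G + Gᵀ) *ᵥ y = 2 * (y ⬝ᵥ G *ᵥ y) := by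
  rw [add_mulVec, dotProduct_add, dotProduct_mulVec y Gᵀ, vecMul_transpose, dotProduct_comm]
  ring

theorem dotProduct_mul_mulVec_eq (Z : Matrix m l ℝ) (M : Matrix m n ℝ) (z : l → ℝ) (x : n → ℝ) :
    z ⬝ᵥ (Zᵀ * M) *ᵥ x = (Z *ᵥ z) ⬝ᵥ M *ᵥ x := by
  rw [← mulVec_mulVec, dotProduct_mulVec, vecMul_transpose]

theorem dotProduct_mul_mul_transpose_mulVec_self (A : Matrix m n ℝ) (C : Matrix n n ℝ)
    (x : m → ℝ) : x ⬝ᵥ (A * C * Aᵀ) *ᵥ x = (Aᵀ *ᵥ x) ⬝ᵥ C *ᵥ (Aᵀ *ᵥ x) := by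
  rw [← mulVec_mulVec, ← mulVec_mulVec, dotProduct_mulVec x A, ← mulVec_transpose]

theorem eq_zero_of_mem_range_of_transpose_mulVec_eq_zero {Z : Matrix m l ℝ} {v : m → ℝ}
    (hv : v ∈ LinearMap.range Z.mulVecLin) (hZv : Zᵀ *ᵥ v = 0) : v = 0 := by
  obtain ⟨u, rfl⟩ := hv
  rw [mulVecLin_apply] at hZv ⊢
  have h := dotProduct_mulVec u Zᵀ (Z *ᵥ u)
  rw [hZv, dotProduct_zero, vecMul_transpose] at h
  exact dotProduct_self_eq_zero.mp h.symm

theorem transpose_mulVec_eq_zero_of_range_le {Z : Matrix m l ℝ} {A : Matrix m n ℝ}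
    {C : Matrix n n ℝ} (hC : ∀ y : n → ℝ, y ≠ 0 → 0 < y ⬝ᵥ C *ᵥ y)
    (hAZ : LinearMap.range A.mulVecLin ≤ LinearMap.range Z.mulVecLin) {x : m → ℝ}
    (h : (Zᵀ * A * C * Aᵀ) *ᵥ x = 0) : Aᵀ *ᵥ x = 0 := by
  have hACA : (A * C * Aᵀ) *ᵥ x = 0 := by
    refine eq_zero_of_mem_range_of_transpose_mulVec_eq_zero (hAZ ⟨(C * Aᵀ) *ᵥ x, ?_⟩) ?_
    · rw [mulVecLin_apply, mulVec_mulVec, Matrix.mul_assoc]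
    · rwa [mulVec_mulVec, ← Matrix.mul_assoc, ← Matrix.mul_assoc]
  refine eq_zero_of_dotProduct_mulVec_self_eq_zero hC ?_
  rw [← dotProduct_mul_mul_transpose_mulVec_self, hACA, dotProduct_zero]

theorem transpose_mulVec_eq_zero_of_mem_range {k j : Type*} [Fintype k] [Fintype j]
    {Z : Matrix m l ℝ} {R : Matrix m k ℝ} {G : Matrix k k ℝ} {V : Matrix m j ℝ}
    (hG : ∀ y : k → ℝ, y ≠ 0 → 0 < y ⬝ᵥ (G + Gᵀ) *ᵥ y) {x : m → ℝ} {w : j → ℝ}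
    (hx : x ∈ LinearMap.range Z.mulVecLin) (h : (Zᵀ * R * G * Rᵀ) *ᵥ x + (Zᵀ * V) *ᵥ w = 0)
    (hV : Vᵀ *ᵥ x = 0) : Rᵀ *ᵥ x = 0 := by
  obtain ⟨z, hz⟩ := hx
  rw [mulVecLin_apply] at hz
  have hRGR : z ⬝ᵥ (Zᵀ * R * G * Rᵀ) *ᵥ x = (Rᵀ *ᵥ x) ⬝ᵥ G *ᵥ (Rᵀ *ᵥ x) := by
    rw [Matrix.mul_assoc, Matrix.mul_assoc, dotProduct_mul_mulVec_eq, hz, ← Matrix.mul_assoc,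
      dotProduct_mul_mul_transpose_mulVec_self]
  have hZV : z ⬝ᵥ (Zᵀ * V) *ᵥ w = 0 := by
    rw [dotProduct_mul_mulVec_eq, hz, dotProduct_mulVec, ← mulVec_transpose, hV, zero_dotProduct]
  have hq : (Rᵀ *ᵥ x) ⬝ᵥ G *ᵥ (Rᵀ *ᵥ x) = 0 := by
    calc _ = z ⬝ᵥ ((Zᵀ * R * G * Rᵀ) *ᵥ x + (Zᵀ * V) *ᵥ w) := by
          rw [dotProduct_add, hZV, add_zero, hRGR]
      _ = 0 := by rw [h, dotProduct_zero]
  refine eq_zero_of_dotProduct_mulVec_self_eq_zero hG ?_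
  rw [dotProduct_add_transpose_mulVec_self, hq, mul_zero]

end Matrix

theorem index_one_kernel_characterization_general {n nC nR nL nV p p' : ℕ}
    (AC : Matrix (Fin n) (Fin nC) ℝ) (AR : Matrix (Fin n) (Fin nR) ℝ)
    (AV : Matrix (Fin n) (Fin nV) ℝ)
    (C : Matrix (Fin nC) (Fin nC) ℝ) (G : Matrix (Fin nR) (Fin nR) ℝ)
    (hCpos : ∀ x : Fin nC → ℝ, x ≠ 0 → 0 < x ⬝ᵥ C.mulVec x)
    (hGpos : ∀ x : Fin nR → ℝ, x ≠ 0 → 0 < x ⬝ᵥ (G + G.transpose).mulVec x)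
    (ZC : Matrix (Fin n) (Fin p) ℝ) (ZC' : Matrix (Fin n) (Fin p') ℝ)
    (hZCrange : LinearMap.range ZC.mulVecLin = LinearMap.ker AC.transpose.mulVecLin)
    (hZC'range : LinearMap.range ZC'.mulVecLin = LinearMap.range AC.mulVecLin) :
    Function.Injective
      (fun x : (Fin nC → ℝ) × (Fin nL → ℝ) × (Fin n → ℝ) × (Fin nV → ℝ) =>
        (-(ZC.transpose * AR * G * AR.transpose).mulVec x.2.2.1 -
            (ZC.transpose * AV).mulVec x.2.2.2,
         -((ZC'.transpose * AC * C * AC.transpose).mulVec x.2.2.1),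
         x.2.1,
         C⁻¹.mulVec x.1 + AC.transpose.mulVec x.2.2.1,
         AV.transpose.mulVec x.2.2.1)) ↔
      ((∀ y : Fin n → ℝ, AC.transpose.mulVec y = 0 → AR.transpose.mulVec y = 0 →
          AV.transpose.mulVec y = 0 → y = 0) ∧
        ∀ w : Fin nV → ℝ, (ZC.transpose * AV).mulVec w = 0 → w = 0) := by
  rw [injective_iff_eq_zero_of_map_add fun a b => by
    simp only [Prod.fst_add, Prod.snd_add, mulVec_add, Prod.mk_add_mk, Prod.mk.injEq]
    exact ⟨by abel, by abel, trivial, by abel, trivial⟩]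
  constructor
  · intro hE
    refine ⟨fun y hAC hAR hAV => congrArg (·.2.2.1) (hE (0, 0, y, 0) ?_),
      fun w hw => congrArg (·.2.2.2) (hE (0, 0, 0, w) ?_)⟩
    · simp [← mulVec_mulVec, hAC, hAR, hAV]
    · simp [hw]
  rintro ⟨hfull, hker⟩ ⟨x₁, x₂, x₃, x₄⟩ hx
  simp only [Prod.mk_eq_zero, neg_eq_zero, ← neg_add'] at hx
  obtain ⟨h₁, h₂, rfl, h₄, h₅⟩ := hx
  have hAC : ACᵀ *ᵥ x₃ = 0 := transpose_mulVec_eq_zero_of_range_le hCpos hZC'range.ge h₂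
  have hAR : ARᵀ *ᵥ x₃ = 0 :=
    transpose_mulVec_eq_zero_of_mem_range hGpos (hZCrange ▸ hAC) h₁ h₅
  obtain rfl : x₃ = 0 := hfull x₃ hAC hAR h₅
  rw [hAC, add_zero] at h₄
  rw [mulVec_zero, zero_add] at h₁
  have hCinv : IsUnit C⁻¹ :=
    isUnit_nonsing_inv_iff.mpr (isUnit_of_forall_dotProduct_mulVec_pos hCpos)
  simp [mulVec_injective_of_isUnit hCinv (h₄.trans (mulVec_zero _).symm), hker x₄ h₁]

/-- Kernel characterization underlying the index-one criterion for the first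
circuit model.  The linear map `Ẽ` (the coefficient matrix of the derivative array) is
injective if and only if `(A_C A_R A_V)` has full row rank and `ker (Z_Cᵀ A_V) = {0}`. -/
theorem index_one_kernel_characterization {n nC nR nL nV p p' : ℕ}
    (AC : Matrix (Fin n) (Fin nC) ℝ) (AR : Matrix (Fin n) (Fin nR) ℝ)
    (AV : Matrix (Fin n) (Fin nV) ℝ)
    (C : Matrix (Fin nC) (Fin nC) ℝ) (G : Matrix (Fin nR) (Fin nR) ℝ)
    (hCsymm : C.transpose = C)
    (hCpos : ∀ x : Fin nC → ℝ, x ≠ 0 → 0 < x ⬝ᵥ C.mulVec x)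
    (hGpos : ∀ x : Fin nR → ℝ, x ≠ 0 → 0 < x ⬝ᵥ (G + G.transpose).mulVec x)
    (ZC : Matrix (Fin n) (Fin p) ℝ) (ZC' : Matrix (Fin n) (Fin p') ℝ)
    (hZCinj : Function.Injective ZC.mulVecLin)
    (hZCrange : LinearMap.range ZC.mulVecLin = LinearMap.ker AC.transpose.mulVecLin)
    (hZC'inj : Function.Injective ZC'.mulVecLin)
    (hZC'range : LinearMap.range ZC'.mulVecLin = LinearMap.range AC.mulVecLin) :
    Function.Injective
      (fun x : (Fin nC → ℝ) × (Fin nL → ℝ) × (Fin n → ℝ) × (Fin nV → ℝ) =>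
        (-(ZC.transpose * AR * G * AR.transpose).mulVec x.2.2.1 -
            (ZC.transpose * AV).mulVec x.2.2.2,
         -((ZC'.transpose * AC * C * AC.transpose).mulVec x.2.2.1),
         x.2.1,
         C⁻¹.mulVec x.1 + AC.transpose.mulVec x.2.2.1,
         AV.transpose.mulVec x.2.2.1)) ↔
      ((∀ y : Fin n → ℝ, AC.transpose.mulVec y = 0 → AR.transpose.mulVec y = 0 →
          AV.transpose.mulVec y = 0 → y = 0) ∧
        ∀ w : Fin nV → ℝ, (ZC.transpose * AV).mulVec w = 0 → w = 0) :=
  index_one_kernel_characterization_general AC AR AV C G hCpos hGpos ZC ZC' hZCrange hZC'range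
end
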